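/- arXiv:1406.5659 — 2 statements merged into one kernel-verified Lean document; each statement's English description precedes it below -/
import Mathlib

section
/- (Kronecker's theorem) Let K be a number field and P = [x_0 : ... : x_n] ∈ P^n(K) with x_{i_0} ≠ 0 for some fixed i_0. Then H(P) = 1 if and only if for every 0 ≤ j ≤ n the ratio x_j / x_{i_0} is zero or a root of unity. -/
open NumberField IsDedekindDomain

open Classical in
/-- The normalized absolute value of `x ∈ K` at a finite place `v` of the number field `K`,
namely `N(v)^(-ord_v x)`, so that together with the infinite places (weighted by their
local degrees) the product formula holds. -/
noncomputable def finAbs (K : Type*) [Field K] [NumberField K]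
    (v : HeightOneSpectrum (𝓞 K)) (x : K) : ℝ :=
  if h : x = 0 then 0
  else (Ideal.absNorm v.asIdeal : ℝ) ^
    (Multiplicative.toAdd (WithZero.unzero ((Valuation.ne_zero_iff _).mpr h :
      v.valuation K x ≠ 0)))

/-- The multiplicative height `H_K` of a tuple of homogeneous coordinates over a number
field `K`: the product over all places `v` of `K` of `max_j |x_j|_v^(n_v)`, where the
normalized absolute values satisfy the product formula (the local degree `n_v` is `mult v`
at an infinite place and is already accounted for by the normalization at finite places). -/
noncomputable def tupleHeight (K : Type*) [Field K] [NumberField K]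
    {iota : Type*} [Fintype iota] [Nonempty iota] (x : iota → K) : ℝ :=
  (∏ v : InfinitePlace K, (⨆ j, v (x j)) ^ v.mult) *
    ∏ᶠ v : HeightOneSpectrum (𝓞 K), ⨆ j, finAbs K v (x j)

/-- The absolute multiplicative height `H = H_K^(1/[K:ℚ])`. -/
noncomputable def absTupleHeight (K : Type*) [Field K] [NumberField K]
    {iota : Type*} [Fintype iota] [Nonempty iota] (x : iota → K) : ℝ :=
  tupleHeight K x ^ ((Module.finrank ℚ K : ℝ)⁻¹)
/-!
After normalising `x i₀ = 1`, the height of the tuple lies between the height of each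
coordinate `x j` and the product of these heights, so `H(P) = 1` exactly when every `x j`
has height `1`. A non-zero `z` of height `1` has all its powers of height `1`, so by the
Northcott property only finitely many of them are distinct, and `z` is a root of unity;
conversely `H(z)^k = H(z^k) = 1`.
-/

namespace Height

variable {K : Type*} [Field K] [AdmissibleAbsValues K]

lemma mulHeight₁_eq_one_of_pow_eq_one {z : K} {k : ℕ} (hk : k ≠ 0) (hz : z ^ k = 1) :
    mulHeight₁ z = 1 := by
  rw [← pow_eq_one_iff_of_nonneg (mulHeight₁_nonneg z) hk, ← mulHeight₁_pow, hz,
    mulHeight₁_one]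

lemma exists_pow_eq_one_of_mulHeight₁_eq_one [Northcott (mulHeight₁ (K := K))] {z : K}
    (hz₀ : z ≠ 0) (hz : mulHeight₁ z = 1) : ∃ k, 0 < k ∧ z ^ k = 1 := by
  have hpowers : ∀ n, z ^ n ∈ {w : K | mulHeight₁ w ≤ 1} := fun n ↦ by
    simp [mulHeight₁_pow, hz]
  obtain ⟨a, b, hab, hpow⟩ :=
    (Northcott.finite_le (h := mulHeight₁) 1).exists_lt_map_eq_of_forall_mem hpowers
  refine ⟨b - a, Nat.sub_pos_of_lt hab, ?_⟩
  rw [← Nat.sub_add_cancel hab.le, pow_add] at hpow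
  exact (mul_eq_right₀ (pow_ne_zero a hz₀)).mp hpow.symm

lemma mulHeight₁_eq_one_iff [Northcott (mulHeight₁ (K := K))] {z : K} :
    mulHeight₁ z = 1 ↔ z = 0 ∨ ∃ k, 0 < k ∧ z ^ k = 1 := by
  refine ⟨fun hz ↦ or_iff_not_imp_left.mpr (exists_pow_eq_one_of_mulHeight₁_eq_one · hz),
    ?_⟩
  rintro (rfl | ⟨k, hk, hzk⟩)
  · exact mulHeight₁_zero
  · exact mulHeight₁_eq_one_of_pow_eq_one hk.ne' hzk

variable {ι : Type*}

lemma mulHeight₁_le_mulHeight [Finite ι] {x : ι → K} {i₀ : ι} (hx : x i₀ = 1) (j : ι) :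
    mulHeight₁ (x j) ≤ mulHeight x :=
  calc mulHeight₁ (x j) = mulHeight (x ∘ ![j, i₀]) := by
        rw [mulHeight₁_eq_mulHeight]
        congr 1
        ext i
        fin_cases i <;> simp [hx]
    _ ≤ mulHeight x := mulHeight_comp_le _ _

/-- `x` is a sub-tuple of the multiplication table of the pairs `![x i, 1]`. -/
lemma mulHeight_le_prod_mulHeight₁ [Fintype ι] (x : ι → K) :
    mulHeight x ≤ ∏ i, mulHeight₁ (x i) := by
  classical
  have hsub : x = (fun I : ι → Fin 2 ↦ ∏ i, ![x i, 1] (I i)) ∘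
      fun j i ↦ if i = j then 0 else 1 := by
    ext j
    have (i : ι) : ![x i, 1] (if i = j then 0 else 1) = if i = j then x i else 1 := by
      split_ifs <;> rfl
    simp [this]
  calc mulHeight x = mulHeight ((fun I : ι → Fin 2 ↦ ∏ i, ![x i, 1] (I i)) ∘
        fun j i ↦ if i = j then 0 else 1) := by rw [← hsub]
    _ ≤ mulHeight fun I : ι → Fin 2 ↦ ∏ i, ![x i, 1] (I i) := mulHeight_comp_le _ _
    _ = ∏ i, mulHeight₁ (x i) := by
        rw [mulHeight_fun_prod_eq fun i ↦ by simp]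
        simp only [mulHeight₁_eq_mulHeight]

lemma mulHeight_eq_one_iff [Fintype ι] {x : ι → K} {i₀ : ι} (hx : x i₀ = 1) :
    mulHeight x = 1 ↔ ∀ j, mulHeight₁ (x j) = 1 := by
  refine ⟨fun h j ↦ le_antisymm (h ▸ mulHeight₁_le_mulHeight hx j) (one_le_mulHeight₁ _),
    fun h ↦ le_antisymm ?_ (one_le_mulHeight x)⟩
  simpa [h] using mulHeight_le_prod_mulHeight₁ x

end Height

open Height

lemma finAbs_eq_finitePlace {K : Type*} [Field K] [NumberField K]
    (v : HeightOneSpectrum (𝓞 K)) (x : K) : finAbs K v x = FinitePlace.mk v x := by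
  rw [FinitePlace.mk_apply, FinitePlace.norm_embedding']
  rcases eq_or_ne x 0 with rfl | hx
  · simp [finAbs]
  · rw [finAbs, dif_neg hx,
      WithZeroMulInt.toNNReal_neg_apply _ ((Valuation.ne_zero_iff _).mpr hx)]
    push_cast
    rfl

lemma tupleHeight_eq_mulHeight {K : Type*} [Field K] [NumberField K]
    {ι : Type*} [Fintype ι] [Nonempty ι] {x : ι → K} (hx : x ≠ 0) :
    tupleHeight K x = mulHeight x := by
  rw [NumberField.mulHeight_eq hx, tupleHeight,
    ← finprod_comp_equiv FinitePlace.equivHeightOneSpectrum.symm]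
  simp only [finAbs_eq_finitePlace, FinitePlace.mk_apply,
    FinitePlace.equivHeightOneSpectrum_symm_apply]

/-- Kronecker's theorem: a point `P = [x_0 : ⋯ : x_n] ∈ ℙⁿ(K)` with `x_{i₀} ≠ 0` has
absolute height `H(P) = 1` if and only if every ratio `x_j / x_{i₀}` is zero or a root
of unity. -/
theorem kronecker (K : Type*) [Field K] [NumberField K] {n : ℕ}
    (x : Fin (n + 1) → K) (i₀ : Fin (n + 1)) (h : x i₀ ≠ 0) :
    absTupleHeight K x = 1 ↔
      ∀ j, x j / x i₀ = 0 ∨ ∃ k : ℕ, 0 < k ∧ (x j / x i₀) ^ k = 1 := by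
  have hx : x ≠ 0 := fun hx ↦ h (by simp [hx])
  have hnormalized : ((x i₀)⁻¹ • x) i₀ = 1 := inv_mul_cancel₀ h
  have hdeg : (Module.finrank ℚ K : ℝ) ≠ 0 := Nat.cast_ne_zero.mpr Module.finrank_pos.ne'
  rw [absTupleHeight, tupleHeight_eq_mulHeight hx,
    ← mulHeight_smul_eq_mulHeight x (inv_ne_zero h),
    Real.rpow_inv_eq (mulHeight_pos _).le zero_le_one hdeg, Real.one_rpow,
    mulHeight_eq_one_iff hnormalized]
  simp only [Pi.smul_apply, smul_eq_mul, ← div_eq_inv_mul, mulHeight₁_eq_one_iff]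
end

section
/- Let f(x_0,...,x_n) and g(y_0,...,y_m) be nonzero polynomials over Q̄ in disjoint sets of variables. Then the projective height is multiplicative: H(f · g) = H(f) · H(g). -/
open NumberField IsDedekindDomain

/-- The Gauss norm of a (multivariable) polynomial at an infinite place `v`:
the maximum of `v` over its coefficients. -/
noncomputable def gaussInf (K : Type*) [Field K] [NumberField K] {sigma : Type*}
    (v : InfinitePlace K) (f : MvPolynomial sigma K) : ℝ :=
  ⨆ m ∈ f.support, v (MvPolynomial.coeff m f)

/-- The Gauss norm of a (multivariable) polynomial at a finite place `v`:
the maximum of the normalized `v`-adic absolute value over its coefficients. -/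
noncomputable def gaussFin (K : Type*) [Field K] [NumberField K] {sigma : Type*}
    (v : HeightOneSpectrum (𝓞 K)) (f : MvPolynomial sigma K) : ℝ :=
  ⨆ m ∈ f.support, finAbs K v (MvPolynomial.coeff m f)

/-- The projective multiplicative height `H_K(f)` of a polynomial: the product over all
places of the Gauss norms (with local-degree exponents at the infinite places). -/
noncomputable def polyHeight (K : Type*) [Field K] [NumberField K] {sigma : Type*}
    (f : MvPolynomial sigma K) : ℝ :=
  (∏ v : InfinitePlace K, (gaussInf K v f) ^ v.mult) *
    ∏ᶠ v : HeightOneSpectrum (𝓞 K), gaussFin K v f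

/-- The projective absolute multiplicative height `H(f) = H_K(f)^(1/[K:ℚ])` of a polynomial. -/
noncomputable def absPolyHeight (K : Type*) [Field K] [NumberField K] {sigma : Type*}
    (f : MvPolynomial sigma K) : ℝ :=
  polyHeight K f ^ ((Module.finrank ℚ K : ℝ)⁻¹)

/-- The affine multiplicative height `H^A_K(f)` of a polynomial: the product over all
places of `max {1, |f|_v^(n_v)}` where `|f|_v` is the Gauss norm. -/
noncomputable def affPolyHeight (K : Type*) [Field K] [NumberField K] {sigma : Type*}
    (f : MvPolynomial sigma K) : ℝ :=
  (∏ v : InfinitePlace K, max 1 ((gaussInf K v f) ^ v.mult)) *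
    ∏ᶠ v : HeightOneSpectrum (𝓞 K), max 1 (gaussFin K v f)

/-- The affine absolute height `H^A(f) = H^A_K(f)^(1/[K:ℚ])` of a polynomial. -/
noncomputable def absAffPolyHeight (K : Type*) [Field K] [NumberField K] {sigma : Type*}
    (f : MvPolynomial sigma K) : ℝ :=
  affPolyHeight K f ^ ((Module.finrank ℚ K : ℝ)⁻¹)

/-!
The monomials of `f(x) · g(y)` are exactly the products `x^a y^b` of a monomial of `f` and one of
`g`, with coefficient `f_a g_b`. Hence at every place `v`, archimedean or not, the Gauss norm
`max_m |coeff_m|_v` is multiplicative on such a product, with no Gauss lemma needed. Since only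
finitely many finite places see a Gauss norm different from `1`, multiplying over all places gives
`H_K(f g) = H_K(f) H_K(g)`, and taking `[K : ℚ]`-th roots gives the claim.
-/

namespace MvPolynomial

variable {R σ τ : Type*} [CommSemiring R]

theorem coeff_sumElim_rename_inl_mul_rename_inr (f : MvPolynomial σ R) (g : MvPolynomial τ R)
    (d : σ →₀ ℕ) (e : τ →₀ ℕ) :
    coeff (Finsupp.sumElim d e) (rename Sum.inl f * rename Sum.inr g) = coeff d f * coeff e g := by
  classical
  induction f using induction_on' with
  | add f₁ f₂ hf₁ hf₂ => simp only [map_add, add_mul, coeff_add, hf₁, hf₂]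
  | monomial a r =>
    induction g using induction_on' with
    | add g₁ g₂ hg₁ hg₂ => simp only [map_add, mul_add, coeff_add, hg₁, hg₂]
    | monomial b s =>
      have hinj : Finsupp.sumElim a b = Finsupp.sumElim d e ↔ a = d ∧ b = e := by
        simpa using Finsupp.sumFinsuppEquivProdFinsupp.symm.injective.eq_iff
          (a := (a, b)) (b := (d, e))
      simp only [rename_monomial, monomial_mul, coeff_monomial, ← Finsupp.sumElim_eq_add, hinj]
      split_ifs <;> simp_all

theorem sumElim_mem_support_rename_inl_mul_rename_inr_iff [NoZeroDivisors R]
    {f : MvPolynomial σ R} {g : MvPolynomial τ R} {d : σ →₀ ℕ} {e : τ →₀ ℕ} :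
    Finsupp.sumElim d e ∈ (rename Sum.inl f * rename Sum.inr g).support ↔
      d ∈ f.support ∧ e ∈ g.support := by
  simp [coeff_sumElim_rename_inl_mul_rename_inr]

variable {F : Type*} [FunLike F R ℝ]

noncomputable def gaussNorm (w : F) (p : MvPolynomial σ R) : ℝ :=
  ⨆ m ∈ p.support, w (p.coeff m)

variable [NonnegHomClass F R ℝ]

theorem gaussNorm_eq_iSup_support (w : F) (p : MvPolynomial σ R) :
    gaussNorm w p = ⨆ m : p.support, w (p.coeff m) :=
  cbiSup_eq_ciSup_subtype (Set.finite_range _).bddAbove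
    (by simpa using Real.iSup_nonneg fun _ => apply_nonneg w _)

theorem gaussNorm_nonneg (w : F) (p : MvPolynomial σ R) : 0 ≤ gaussNorm w p := by
  rw [gaussNorm_eq_iSup_support]
  exact Real.iSup_nonneg fun _ => apply_nonneg w _

theorem gaussNorm_rename_inl_mul_rename_inr [NoZeroDivisors R] [MulHomClass F R ℝ] (w : F)
    (f : MvPolynomial σ R) (g : MvPolynomial τ R) :
    gaussNorm w (rename Sum.inl f * rename Sum.inr g) = gaussNorm w f * gaussNorm w g := by
  -- a monomial of the product is a pair of monomials of `f` and `g`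
  let E : (rename Sum.inl f * rename Sum.inr g).support ≃ f.support × g.support :=
    (Finsupp.sumFinsuppEquivProdFinsupp.subtypeEquiv fun m => by
      rw [← Finsupp.comapDomain_sumElim_comapDomain m,
        sumElim_mem_support_rename_inl_mul_rename_inr_iff]
      simp).trans Equiv.subtypeProdEquivProd
  simp only [gaussNorm_eq_iSup_support]
  rw [← Real.iSup_fun_mul_eq_iSup_mul_iSup_of_nonneg, ← E.symm.iSup_comp]
  refine iSup_congr fun ⟨⟨d, _⟩, ⟨e, _⟩⟩ => ?_
  rw [← coeff_sumElim_rename_inl_mul_rename_inr]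
  rfl

end MvPolynomial

section NumberField

open MvPolynomial

variable {K : Type*} [Field K] [NumberField K] {σ τ : Type*}

theorem finAbs_eq_adicAbv (v : HeightOneSpectrum (𝓞 K)) (x : K) :
    finAbs K v x = NumberField.HeightOneSpectrum.adicAbv K v x := by
  rw [NumberField.HeightOneSpectrum.adicAbv_def, finAbs]
  split_ifs with hx
  · simp [hx]
  · rw [WithZeroMulInt.toNNReal_neg_apply]
    push_cast
    rfl

theorem hasFiniteMulSupport_adicAbv {x : K} (hx : x ≠ 0) :
    (fun v : HeightOneSpectrum (𝓞 K) =>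
      NumberField.HeightOneSpectrum.adicAbv K v x).HasFiniteMulSupport := by
  convert (FinitePlace.hasFiniteMulSupport hx).comp_of_injective
    FinitePlace.equivHeightOneSpectrum.symm.injective using 2 with v
  simp [FinitePlace.equivHeightOneSpectrum_symm_apply, FinitePlace.norm_embedding]

theorem gaussInf_eq_gaussNorm (v : InfinitePlace K) (f : MvPolynomial σ K) :
    gaussInf K v f = gaussNorm v f :=
  rfl

theorem gaussFin_eq_gaussNorm_adicAbv (v : HeightOneSpectrum (𝓞 K)) (f : MvPolynomial σ K) :
    gaussFin K v f = gaussNorm (NumberField.HeightOneSpectrum.adicAbv K v) f := by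
  simp only [gaussFin, gaussNorm, finAbs_eq_adicAbv]

theorem hasFiniteMulSupport_gaussNorm_adicAbv {f : MvPolynomial σ K} (hf : f ≠ 0) :
    (fun v : HeightOneSpectrum (𝓞 K) =>
      gaussNorm (NumberField.HeightOneSpectrum.adicAbv K v) f).HasFiniteMulSupport := by
  have : Nonempty f.support := (support_nonempty.mpr hf).to_subtype
  simp only [gaussNorm_eq_iSup_support]
  exact .iSup fun m => hasFiniteMulSupport_adicAbv (mem_support_iff.mp m.2)

theorem polyHeight_nonneg (f : MvPolynomial σ K) : 0 ≤ polyHeight K f := by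
  simp only [polyHeight, gaussInf_eq_gaussNorm, gaussFin_eq_gaussNorm_adicAbv]
  exact mul_nonneg (Finset.prod_nonneg fun v _ => pow_nonneg (gaussNorm_nonneg v f) _)
    (finprod_nonneg fun v => gaussNorm_nonneg _ f)

theorem polyHeight_rename_inl_mul_rename_inr {f : MvPolynomial σ K} {g : MvPolynomial τ K}
    (hf : f ≠ 0) (hg : g ≠ 0) :
    polyHeight K (rename Sum.inl f * rename Sum.inr g) = polyHeight K f * polyHeight K g := by
  simp only [polyHeight, gaussInf_eq_gaussNorm, gaussFin_eq_gaussNorm_adicAbv,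
    gaussNorm_rename_inl_mul_rename_inr, mul_pow, Finset.prod_mul_distrib]
  rw [finprod_mul_distrib (hasFiniteMulSupport_gaussNorm_adicAbv hf)
    (hasFiniteMulSupport_gaussNorm_adicAbv hg)]
  ring

end NumberField

/-- The projective height of polynomials is multiplicative for polynomials in disjoint
sets of variables: `H(f · g) = H(f) · H(g)`. -/
theorem absPolyHeight_mul_disjoint_vars (K : Type*) [Field K] [NumberField K]
    {sigma tau : Type*} (f : MvPolynomial sigma K) (g : MvPolynomial tau K)
    (hf : f ≠ 0) (hg : g ≠ 0) :
    absPolyHeight K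
        ((MvPolynomial.rename (Sum.inl : sigma → sigma ⊕ tau) f) *
          (MvPolynomial.rename (Sum.inr : tau → sigma ⊕ tau) g)) =
      absPolyHeight K f * absPolyHeight K g := by
  simp only [absPolyHeight, polyHeight_rename_inl_mul_rename_inr hf hg,
    Real.mul_rpow (polyHeight_nonneg f) (polyHeight_nonneg g)]
end
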